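/- (P-statistical convergence of the r-th order generalization.) Let P be a regular power series method, a < b reals, r ≥ 1 an integer, M > 0 and 0 < α ≤ 1. For each j ∈ ℕ let (ρ_{j,k})_{k≥0} be nonnegative functions in C[a,b] and (x_{j,k})_{k≥0} points of [a,b] such that for every x ∈ [a,b] the series Σ_{k=0}^∞ ρ_{j,k}(x) converges to 1, define the positive linear operators G_j(ψ)(x) = Σ_{k=0}^∞ ρ_{j,k}(x) ψ(x_{j,k}) and the r-th order generalizations G_j^{[r]}(ψ)(x) = Σ_{k=0}^∞ ρ_{j,k}(x) · Σ_{ν=0}^r ψ^{(ν)}(x_{j,k}) (x − x_{j,k})^ν / ν!, and assume these series converge (absolutely) for each x ∈ [a,b] and define continuous functions of x. If st_P-lim_{j→∞} ‖G_j(e_i) − e_i‖ = 0 for i = 0, 1, 2, where e_i(x) = x^i, then for every ψ ∈ C^r[a,b] whose r-th derivative ψ^{(r)} belongs to Lip_M(α), we have st_P-lim_{j→∞} ‖G_j^{[r]}(ψ) − ψ‖ = 0. -/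

import Mathlib

/-!
Fix `j` and `η > 0`. The Hölder condition on `ψ⁽ʳ⁾` bounds the error of the Taylor polynomial of
`ψ` at `y`, evaluated at `x`, by `C |x - y| ^ (r + α)`, hence by `η + K (x - y) ^ 2` for a `K`
depending only on `η`. Averaging against the positive weights `ρ_{j,k}(x)`, which sum to one,
turns `(x - x_{j,k}) ^ 2` into the second moment `G_j((· - x) ^ 2)(x)`, which is at most a
constant times the errors `‖G_j(eᵢ) - eᵢ‖`, `i = 0, 1, 2`. So `‖G_j^{[r]}(ψ) - ψ‖` is at most
`η` plus a multiple of a `P`-statistically null sequence, and sets of `P`-density zero are closed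
under finite unions.
-/

open Filter Topology
open scoped ENNReal

/-- A power series method `P`: a sequence `(s j)` of nonnegative reals with `s 0 > 0`
whose power series `s(t) = ∑ s j * t ^ j` has radius of convergence `R`, `0 < R ≤ ∞`. -/
structure PowerSeriesMethod where
  s : ℕ → ℝ
  s_nonneg : ∀ j, 0 ≤ s j
  s0_pos : 0 < s 0
  R : ℝ≥0∞
  R_pos : 0 < R
  summable_of_lt : ∀ t : ℝ, 0 < t → ENNReal.ofReal t < R → Summable fun j => s j * t ^ j
  not_summable_of_gt : ∀ t : ℝ, R < ENNReal.ofReal t → ¬ Summable fun j => s j * t ^ j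

namespace PowerSeriesMethod

/-- The filter of `t` tending to `R` from the left (through `0 < t < R`);
if `R = ∞` this is `atTop`. -/
noncomputable def limFilter (P : PowerSeriesMethod) : Filter ℝ :=
  if P.R = ⊤ then Filter.atTop else nhdsWithin P.R.toReal (Set.Ioo 0 P.R.toReal)

/-- `s(t) = ∑ s j t ^ j`. -/
noncomputable def sum (P : PowerSeriesMethod) (t : ℝ) : ℝ := ∑' j, P.s j * t ^ j

/-- The quotient `(∑_{j ∈ E} s j t ^ j) / s(t)` whose limit as `t → R⁻` is the `P`-density. -/
noncomputable def densityFn (P : PowerSeriesMethod) (E : Set ℕ) (t : ℝ) : ℝ :=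
  (∑' j, Set.indicator E (fun j => P.s j * t ^ j) j) / P.sum t

/-- `E ⊆ ℕ` has `P`-density `d`. -/
def HasDensity (P : PowerSeriesMethod) (E : Set ℕ) (d : ℝ) : Prop :=
  Tendsto (P.densityFn E) P.limFilter (𝓝 d)

/-- The power series method `P` is regular. -/
def Regular (P : PowerSeriesMethod) : Prop :=
  ∀ j, Tendsto (fun t => P.s j * t ^ j / P.sum t) P.limFilter (𝓝 0)

/-- The sequence `x` is `P`-statistically convergent to `L`. -/
def StatTendsto (P : PowerSeriesMethod) (x : ℕ → ℝ) (L : ℝ) : Prop :=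
  ∀ ε : ℝ, 0 < ε → P.HasDensity {j | ε ≤ |x j - L|} 0

end PowerSeriesMethod

/-- The monomial `eₙ(x) = xⁿ` as an element of `C([a,b], ℝ)`. -/
noncomputable def monomial (a b : ℝ) (i : ℕ) : C(Set.Icc a b, ℝ) :=
  ⟨fun x => (x : ℝ) ^ i, by continuity⟩

open Set
open scoped Nat

namespace PowerSeriesMethod

variable (P : PowerSeriesMethod)

theorem s_mul_pow_nonneg {t : ℝ} (ht : 0 ≤ t) (j : ℕ) : 0 ≤ P.s j * t ^ j :=
  mul_nonneg (P.s_nonneg j) (pow_nonneg ht j)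

theorem eventually_summable :
    ∀ᶠ t in P.limFilter, 0 ≤ t ∧ Summable fun j => P.s j * t ^ j := by
  have hR : ∀ t : ℝ, 0 < t → ENNReal.ofReal t < P.R →
      0 ≤ t ∧ Summable fun j => P.s j * t ^ j :=
    fun t ht htR => ⟨ht.le, P.summable_of_lt t ht htR⟩
  rw [limFilter]
  split_ifs with h
  · filter_upwards [eventually_gt_atTop 0] with t ht using hR t ht (h ▸ ENNReal.ofReal_lt_top)
  · filter_upwards [self_mem_nhdsWithin] with t ht
    exact hR t ht.1 ((ENNReal.ofReal_lt_iff_lt_toReal ht.1.le h).2 ht.2)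

theorem densityFn_nonneg {t : ℝ} (ht : 0 ≤ t) (E : Set ℕ) : 0 ≤ P.densityFn E t :=
  div_nonneg (tsum_nonneg fun j => indicator_nonneg (fun j _ => P.s_mul_pow_nonneg ht j) j)
    (tsum_nonneg (P.s_mul_pow_nonneg ht))

theorem densityFn_le_add_of_subset_union {t : ℝ} (ht : 0 ≤ t)
    (hs : Summable fun j => P.s j * t ^ j) {E A B : Set ℕ} (hE : E ⊆ A ∪ B) :
    P.densityFn E t ≤ P.densityFn A t + P.densityFn B t := by
  have hnonneg : 0 ≤ fun j => P.s j * t ^ j := P.s_mul_pow_nonneg ht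
  have hle : ∀ j, E.indicator (fun j => P.s j * t ^ j) j ≤
      A.indicator (fun j => P.s j * t ^ j) j + B.indicator (fun j => P.s j * t ^ j) j := by
    intro j
    rw [← indicator_union_add_inter_apply]
    exact le_add_of_le_of_nonneg (indicator_le_indicator_of_subset hE hnonneg j)
      (indicator_nonneg (fun j _ => hnonneg j) j)
  rw [densityFn, densityFn, densityFn, ← add_div, ← (hs.indicator A).tsum_add (hs.indicator B)]
  exact div_le_div_of_nonneg_right
    (Summable.tsum_le_tsum hle (hs.indicator E) ((hs.indicator A).add (hs.indicator B)))
    (tsum_nonneg hnonneg)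

theorem hasDensity_zero_of_subset_union {E A B : Set ℕ} (hA : P.HasDensity A 0)
    (hB : P.HasDensity B 0) (hE : E ⊆ A ∪ B) : P.HasDensity E 0 := by
  have hAB : Tendsto (fun t => P.densityFn A t + P.densityFn B t) P.limFilter (𝓝 0) := by
    simpa using hA.add hB
  refine tendsto_of_tendsto_of_tendsto_of_le_of_le' tendsto_const_nhds hAB ?_ ?_
  · filter_upwards [P.eventually_summable] with t ht using P.densityFn_nonneg ht.1 E
  · filter_upwards [P.eventually_summable] with t ht
    exact P.densityFn_le_add_of_subset_union ht.1 ht.2 hE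

variable {P}

theorem StatTendsto.add {u v : ℕ → ℝ} (hu : P.StatTendsto u 0) (hv : P.StatTendsto v 0) :
    P.StatTendsto (fun j => u j + v j) 0 := by
  intro ε hε
  refine P.hasDensity_zero_of_subset_union (hu (ε / 2) (half_pos hε)) (hv (ε / 2) (half_pos hε))
    fun j hj => ?_
  simp only [mem_ofPred_eq, sub_zero, mem_union] at hj ⊢
  by_contra! h
  linarith [abs_add_le (u j) (v j)]

theorem StatTendsto.of_le_add_mul {u x : ℕ → ℝ} (hu : P.StatTendsto u 0)
    (h : ∀ η > 0, ∃ K, ∀ j, |x j| ≤ η + K * |u j|) : P.StatTendsto x 0 := by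
  intro ε hε
  obtain ⟨K, hK⟩ := h (ε / 2) (half_pos hε)
  have hδ : 0 < ε / (2 * (|K| + 1)) := by positivity
  refine P.hasDensity_zero_of_subset_union (hu _ hδ) (hu _ hδ) fun j hj => ?_
  simp only [mem_ofPred_eq, sub_zero, union_self] at hj ⊢
  by_contra! h
  have hKu : K * |u j| < (|K| + 1) * (ε / (2 * (|K| + 1))) :=
    calc K * |u j| ≤ (|K| + 1) * |u j| := by nlinarith [le_abs_self K, abs_nonneg (u j)]
      _ < (|K| + 1) * (ε / (2 * (|K| + 1))) := by gcongr
  have : (|K| + 1) * (ε / (2 * (|K| + 1))) = ε / 2 := by field_simp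
  linarith [hK j]

end PowerSeriesMethod

theorem sum_iteratedDerivWithin_mul_div_factorial (ψ : ℝ → ℝ) (r : ℕ) (s : Set ℝ) (x y : ℝ) :
    ∑ ν ∈ Finset.range (r + 1), iteratedDerivWithin ν ψ s y * (x - y) ^ ν / (ν ! : ℝ) =
      taylorWithinEval ψ r s y x := by
  rw [taylor_within_apply]
  refine Finset.sum_congr rfl fun ν _ => ?_
  rw [smul_eq_mul]
  ring

theorem hasDerivWithinAt_taylorWithinEval_add_monomial {a b c x u : ℝ} {n : ℕ} {ψ : ℝ → ℝ}
    (hab : a < b) (hψ : ContDiffOn ℝ (n + 1) ψ (Icc a b)) (hu : u ∈ Icc a b) :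
    HasDerivWithinAt
      (fun v => taylorWithinEval ψ n (Icc a b) v x + c * (x - v) ^ (n + 1) / (n + 1)!)
      ((n ! : ℝ)⁻¹ * (x - u) ^ n * (iteratedDerivWithin (n + 1) ψ (Icc a b) u - c))
      (Icc a b) u := by
  have htaylor := hasDerivWithinAt_taylorWithinEval (x := x) (uniqueDiffOn_Icc hab)
    self_mem_nhdsWithin hu subset_rfl hψ.of_succ
    (hψ.differentiableOn_iteratedDerivWithin (mod_cast n.lt_succ_self) (uniqueDiffOn_Icc hab)
      u hu)
  have hmonomial :=
    (((monomial_has_deriv_aux u x n).hasDerivWithinAt (s := Icc a b)).const_mul c).div_const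
      ((n + 1)! : ℝ)
  refine (htaylor.add hmonomial).congr_deriv ?_
  rw [smul_eq_mul, Nat.factorial_succ]
  push_cast
  field_simp
  ring

theorem abs_sub_taylorWithinEval_succ_le {a b M α x y : ℝ} {n : ℕ} {ψ : ℝ → ℝ} (hab : a < b)
    (hψ : ContDiffOn ℝ (n + 1) ψ (Icc a b)) (hM : 0 ≤ M) (hα : 0 ≤ α)
    (hLip : ∀ x ∈ Icc a b, ∀ y ∈ Icc a b,
      |iteratedDerivWithin (n + 1) ψ (Icc a b) x - iteratedDerivWithin (n + 1) ψ (Icc a b) y| ≤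
        M * |x - y| ^ α)
    (hx : x ∈ Icc a b) (hy : y ∈ Icc a b) :
    |ψ x - taylorWithinEval ψ (n + 1) (Icc a b) y x| ≤ M / n ! * |x - y| ^ (n + 1 + α) := by
  -- `u ↦ T_n(u)(x) + ψ⁽ⁿ⁺¹⁾(y) (x - u) ^ (n + 1) / (n + 1)!` runs from `T_{n+1}(y)(x)` at `u = y`
  -- to `ψ x` at `u = x`, and the Hölder condition bounds its derivative.
  have hsub : uIcc y x ⊆ Icc a b := uIcc_subset_Icc hy hx
  have hderiv_bound : ∀ u ∈ uIcc y x,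
      ‖(n ! : ℝ)⁻¹ * (x - u) ^ n * (iteratedDerivWithin (n + 1) ψ (Icc a b) u -
        iteratedDerivWithin (n + 1) ψ (Icc a b) y)‖ ≤
        (n ! : ℝ)⁻¹ * |x - y| ^ n * (M * |x - y| ^ α) := by
    intro u hu
    rw [Real.norm_eq_abs, abs_mul, abs_mul, abs_pow, abs_of_pos (by positivity)]
    have hxu : |x - u| ≤ |x - y| := abs_sub_right_of_mem_uIcc hu
    have huy : |u - y| ≤ |x - y| := abs_sub_left_of_mem_uIcc hu
    grw [hxu, hLip u (hsub hu) y hy, huy]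
  have hmvt := (convex_uIcc y x).norm_image_sub_le_of_norm_hasDerivWithin_le
    (fun u hu => (hasDerivWithinAt_taylorWithinEval_add_monomial hab hψ (hsub hu)).mono hsub)
    hderiv_bound left_mem_uIcc right_mem_uIcc
  have hFx : taylorWithinEval ψ n (Icc a b) x x +
      iteratedDerivWithin (n + 1) ψ (Icc a b) y * (x - x) ^ (n + 1) / (n + 1)! = ψ x := by
    simp [taylorWithinEval_self]
  have hFy : taylorWithinEval ψ n (Icc a b) y x +
      iteratedDerivWithin (n + 1) ψ (Icc a b) y * (x - y) ^ (n + 1) / (n + 1)! =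
      taylorWithinEval ψ (n + 1) (Icc a b) y x := by
    rw [taylorWithinEval_succ, smul_eq_mul, Nat.factorial_succ]
    push_cast
    field_simp
  rw [hFx, hFy, Real.norm_eq_abs, Real.norm_eq_abs] at hmvt
  calc |ψ x - taylorWithinEval ψ (n + 1) (Icc a b) y x|
      ≤ (n ! : ℝ)⁻¹ * |x - y| ^ n * (M * |x - y| ^ α) * |x - y| := hmvt
    _ = M / n ! * |x - y| ^ (n + 1 + α) := by
      rw [Real.rpow_add' (abs_nonneg _) (by positivity),
        Real.rpow_add' (abs_nonneg _) (by positivity), Real.rpow_natCast, Real.rpow_one]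
      ring

theorem exists_mul_rpow_le_add_mul_sq (C L : ℝ) {p η : ℝ} (hp : 0 < p) (hη : 0 < η) :
    ∃ K, 0 ≤ K ∧ ∀ t ∈ Icc 0 L, C * t ^ p ≤ η + K * t ^ 2 := by
  have hcont : Tendsto (fun t : ℝ => C * t ^ p) (𝓝 0) (𝓝 0) := by
    simpa [Real.zero_rpow hp.ne'] using
      ((Real.continuousAt_rpow_const 0 p (Or.inr hp.le)).const_mul C).tendsto
  obtain ⟨δ, hδ, hsmall⟩ := Metric.eventually_nhds_iff.mp (hcont.eventually (gt_mem_nhds hη))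
  refine ⟨|C| * |L| ^ p / δ ^ 2, by positivity, fun t ht => ?_⟩
  have hK : 0 ≤ |C| * |L| ^ p / δ ^ 2 * t ^ 2 := by positivity
  rcases lt_or_ge t δ with htδ | hδt
  · have := hsmall (by rwa [Real.dist_eq, sub_zero, abs_of_nonneg ht.1])
    linarith
  · calc C * t ^ p ≤ |C| * t ^ p := by
          gcongr
          · exact Real.rpow_nonneg ht.1 p
          · exact le_abs_self C
      _ ≤ |C| * |L| ^ p := by
          gcongr
          exacts [ht.1, ht.2.trans (le_abs_self L)]
      _ = |C| * |L| ^ p / δ ^ 2 * δ ^ 2 := by field_simp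
      _ ≤ |C| * |L| ^ p / δ ^ 2 * t ^ 2 := by gcongr
      _ ≤ η + |C| * |L| ^ p / δ ^ 2 * t ^ 2 := by linarith

theorem exists_abs_taylorWithinEval_sub_le_add_mul_sq {a b M α η : ℝ} {r : ℕ} {ψ : ℝ → ℝ}
    (hab : a < b) (hψ : ContDiffOn ℝ r ψ (Icc a b)) (hM : 0 ≤ M) (hα : 0 < α)
    (hLip : ∀ x ∈ Icc a b, ∀ y ∈ Icc a b,
      |iteratedDerivWithin r ψ (Icc a b) x - iteratedDerivWithin r ψ (Icc a b) y| ≤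
        M * |x - y| ^ α)
    (hη : 0 < η) :
    ∃ K, 0 ≤ K ∧ ∀ x ∈ Icc a b, ∀ y ∈ Icc a b,
      |taylorWithinEval ψ r (Icc a b) y x - ψ x| ≤ η + K * (x - y) ^ 2 := by
  obtain ⟨C, hC⟩ : ∃ C, ∀ x ∈ Icc a b, ∀ y ∈ Icc a b,
      |ψ x - taylorWithinEval ψ r (Icc a b) y x| ≤ C * |x - y| ^ ((r : ℝ) + α) := by
    cases r with
    | zero => exact ⟨M, fun x hx y hy => by simpa [taylor_within_zero_eval] using hLip x hx y hy⟩
    | succ n =>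
      exact ⟨M / n !, fun x hx y hy => by
        simpa using abs_sub_taylorWithinEval_succ_le hab hψ hM hα.le hLip hx hy⟩
  obtain ⟨K, hK, hbound⟩ := exists_mul_rpow_le_add_mul_sq C (b - a)
    (by positivity : 0 < (r : ℝ) + α) hη
  refine ⟨K, hK, fun x hx y hy => ?_⟩
  have hxy : |x - y| ∈ Icc 0 (b - a) :=
    ⟨abs_nonneg _, abs_sub_le_iff.2 ⟨by linarith [hx.2, hy.1], by linarith [hx.1, hy.2]⟩⟩
  rw [abs_sub_comm, ← sq_abs (x - y)]
  exact (hC x hx y hy).trans (hbound _ hxy)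

section PositiveOperator

variable {a b : ℝ} {ρ : ℕ → C(Icc a b, ℝ)} {xs : ℕ → Icc a b}
  {G : C(Icc a b, ℝ) → C(Icc a b, ℝ)}

noncomputable def korovkinError (G : C(Icc a b, ℝ) → C(Icc a b, ℝ)) : ℝ :=
  ‖G (monomial a b 0) - monomial a b 0‖ + ‖G (monomial a b 1) - monomial a b 1‖ +
    ‖G (monomial a b 2) - monomial a b 2‖

/-- The paper's `G((· - x) ^ 2)(x)`, expanded through the test functions. -/
noncomputable def secondMoment (G : C(Icc a b, ℝ) → C(Icc a b, ℝ)) (x : Icc a b) : ℝ :=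
  (x : ℝ) ^ 2 * G (monomial a b 0) x - 2 * x * G (monomial a b 1) x + G (monomial a b 2) x

theorem hasSum_mul_sub_sq
    (hG : ∀ (f : C(Icc a b, ℝ)) x, HasSum (fun k => ρ k x * f (xs k)) (G f x))
    (x : Icc a b) : HasSum (fun k => ρ k x * ((x : ℝ) - xs k) ^ 2) (secondMoment G x) := by
  refine ((((hG (monomial a b 0) x).mul_left ((x : ℝ) ^ 2)).sub
    ((hG (monomial a b 1) x).mul_left (2 * (x : ℝ)))).add (hG (monomial a b 2) x)).congr_fun
    fun k => ?_
  simp only [monomial, ContinuousMap.coe_mk]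
  ring

theorem secondMoment_le_korovkinError (x : Icc a b) :
    secondMoment G x ≤ (1 + max |a| |b|) ^ 2 * korovkinError G := by
  have herr : ∀ i,
      |G (monomial a b i) x - (x : ℝ) ^ i| ≤ ‖G (monomial a b i) - monomial a b i‖ :=
    fun i => ContinuousMap.norm_coe_le_norm (G (monomial a b i) - monomial a b i) x
  have hx : |(x : ℝ)| ≤ max |a| |b| := abs_le_max_abs_abs x.2.1 x.2.2
  set c := max |a| |b|
  set d : ℕ → ℝ := fun i => ‖G (monomial a b i) - monomial a b i‖
  have hc : 0 ≤ c := (abs_nonneg _).trans hx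
  have hd : ∀ i, 0 ≤ d i := fun i => norm_nonneg _
  have h0 := herr 0
  have h1 := herr 1
  simp only [pow_zero, pow_one] at h0 h1
  have hmoment : secondMoment G x = (x : ℝ) ^ 2 * (G (monomial a b 0) x - 1) -
      2 * x * (G (monomial a b 1) x - x) + (G (monomial a b 2) x - (x : ℝ) ^ 2) := by
    unfold secondMoment
    ring
  have hx2 : (x : ℝ) ^ 2 ≤ c ^ 2 := by
    simpa [sq_abs] using pow_le_pow_left₀ (abs_nonneg _) hx 2
  have t0 : (x : ℝ) ^ 2 * (G (monomial a b 0) x - 1) ≤ c ^ 2 * d 0 :=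
    calc (x : ℝ) ^ 2 * (G (monomial a b 0) x - 1)
        ≤ (x : ℝ) ^ 2 * |G (monomial a b 0) x - 1| := by gcongr; exact le_abs_self _
      _ ≤ c ^ 2 * d 0 := by gcongr
  have t1 : -(2 * x * (G (monomial a b 1) x - x)) ≤ 2 * c * d 1 :=
    calc -(2 * x * (G (monomial a b 1) x - x))
        ≤ |2 * x * (G (monomial a b 1) x - x)| := neg_le_abs _
      _ = 2 * |(x : ℝ)| * |G (monomial a b 1) x - x| := by rw [abs_mul, abs_mul, abs_two]
      _ ≤ 2 * c * d 1 := by gcongr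
  have t2 : G (monomial a b 2) x - (x : ℝ) ^ 2 ≤ d 2 := (le_abs_self _).trans (herr 2)
  calc secondMoment G x ≤ c ^ 2 * d 0 + 2 * c * d 1 + d 2 := by rw [hmoment]; linarith
      _ ≤ (1 + c) ^ 2 * korovkinError G := by
        unfold korovkinError
        nlinarith [hd 0, hd 1, hd 2, mul_nonneg hc (hd 0), mul_nonneg hc (hd 2),
          mul_nonneg (sq_nonneg c) (hd 1), mul_nonneg (sq_nonneg c) (hd 2)]

theorem abs_sub_le_of_hasSum (hρ : ∀ k x, 0 ≤ ρ k x) (hρ1 : ∀ x, HasSum (fun k => ρ k x) 1)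
    (hG : ∀ (f : C(Icc a b, ℝ)) x, HasSum (fun k => ρ k x * f (xs k)) (G f x))
    {f : ℝ → ℝ} {g : ℝ → ℝ → ℝ} {η K : ℝ} (hK : 0 ≤ K)
    (hg : ∀ x ∈ Icc a b, ∀ y ∈ Icc a b, |g y x - f x| ≤ η + K * (x - y) ^ 2)
    {x : Icc a b} {S : ℝ} (hS : HasSum (fun k => ρ k x * g (xs k) x) S) :
    |S - f x| ≤ η + K * ((1 + max |a| |b|) ^ 2 * korovkinError G) := by
  have hdiff : HasSum (fun k => ρ k x * (g (xs k) x - f x)) (S - f x) := by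
    simpa [mul_sub] using hS.sub ((hρ1 x).mul_right (f x))
  have hmajorant : HasSum (fun k => ρ k x * (η + K * ((x : ℝ) - xs k) ^ 2))
      (η + K * secondMoment G x) := by
    simpa [mul_add, mul_left_comm] using
      ((hρ1 x).mul_right η).add ((hasSum_mul_sub_sq hG x).mul_left K)
  have hbound : |S - f x| ≤ η + K * secondMoment G x := by
    rw [← hdiff.tsum_eq, ← Real.norm_eq_abs]
    refine tsum_of_norm_bounded hmajorant fun k => ?_
    rw [Real.norm_eq_abs, abs_mul, abs_of_nonneg (hρ k x)]
    exact mul_le_mul_of_nonneg_left (hg x x.2 (xs k) (xs k).2) (hρ k x)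
  exact hbound.trans (by gcongr; exact secondMoment_le_korovkinError x)

end PositiveOperator

theorem rth_order_generalization_pstat_general (P : PowerSeriesMethod)
    (a b : ℝ) (hab : a < b) (r : ℕ)
    (M α : ℝ) (hM : 0 < M) (hα : 0 < α)
    (ρ : ℕ → ℕ → C(Set.Icc a b, ℝ)) (hρ : ∀ j k x, 0 ≤ ρ j k x)
    (xs : ℕ → ℕ → Set.Icc a b)
    (hρ1 : ∀ j (x : Set.Icc a b), HasSum (fun k => ρ j k x) 1)
    (G : ℕ → C(Set.Icc a b, ℝ) → C(Set.Icc a b, ℝ))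
    (hG : ∀ j (f : C(Set.Icc a b, ℝ)) (x : Set.Icc a b),
      HasSum (fun k => ρ j k x * f (xs j k)) (G j f x))
    (hGconv : ∀ i ∈ ({0, 1, 2} : Finset ℕ),
      P.StatTendsto (fun j => ‖G j (monomial a b i) - monomial a b i‖) 0)
    (ψ : ℝ → ℝ) (hψ : ContDiffOn ℝ r ψ (Set.Icc a b))
    (hLip : ∀ x ∈ Set.Icc a b, ∀ y ∈ Set.Icc a b,
      |iteratedDerivWithin r ψ (Set.Icc a b) x - iteratedDerivWithin r ψ (Set.Icc a b) y| ≤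
        M * |x - y| ^ α)
    (Gr : ℕ → C(Set.Icc a b, ℝ))
    (hGr : ∀ j (x : Set.Icc a b),
      HasSum (fun k => ρ j k x *
          ∑ ν ∈ Finset.range (r + 1),
            iteratedDerivWithin ν ψ (Set.Icc a b) (xs j k) *
              ((x : ℝ) - (xs j k : ℝ)) ^ ν / (ν.factorial : ℝ))
        (Gr j x)) :
    P.StatTendsto
      (fun j => ‖Gr j - (⟨(Set.Icc a b).restrict ψ, hψ.continuousOn.restrict⟩ : C(Set.Icc a b, ℝ))‖)
      0 := by
  have hE : P.StatTendsto (fun j => korovkinError (G j)) 0 :=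
    ((hGconv 0 (by simp)).add (hGconv 1 (by simp))).add (hGconv 2 (by simp))
  refine hE.of_le_add_mul fun η hη => ?_
  obtain ⟨K, hK, htaylor⟩ :=
    exists_abs_taylorWithinEval_sub_le_add_mul_sq hab hψ hM.le hα hLip hη
  refine ⟨K * (1 + max |a| |b|) ^ 2, fun j => ?_⟩
  rw [abs_norm]
  refine (ContinuousMap.norm_le _ (by positivity)).2 fun x => ?_
  have hGrj := hGr j x
  simp only [sum_iteratedDerivWithin_mul_div_factorial] at hGrj
  calc ‖(Gr j - _) x‖ ≤ η + K * ((1 + max |a| |b|) ^ 2 * korovkinError (G j)) :=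
        abs_sub_le_of_hasSum (hρ j) (hρ1 j) (hG j) hK htaylor hGrj
    _ ≤ η + K * (1 + max |a| |b|) ^ 2 * |korovkinError (G j)| := by
        rw [← mul_assoc]
        gcongr
        exact le_abs_self _

/-- `P`-statistical convergence of the `r`-th order generalization:
`G_j(ψ)(x) = ∑ₖ ρ_{j,k}(x) ψ(x_{j,k})` are positive linear operators with
`∑ₖ ρ_{j,k}(x) = 1`, and `G_j^{[r]}(ψ)(x) = ∑ₖ ρ_{j,k}(x) ∑_{ν ≤ r} ψ⁽ᵛ⁾(x_{j,k})(x − x_{j,k})ᵛ/ν!`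
is the `r`-th order generalization.  If `st_P-lim ‖G_j(eᵢ) − eᵢ‖ = 0` for `i = 0, 1, 2`, then
for every `ψ ∈ Cʳ[a,b]` with `ψ⁽ʳ⁾ ∈ Lip_M(α)`, `st_P-lim ‖G_j^{[r]}(ψ) − ψ‖ = 0`. -/
theorem rth_order_generalization_pstat (P : PowerSeriesMethod) (hP : P.Regular)
    (a b : ℝ) (hab : a < b) (r : ℕ) (hr : 1 ≤ r)
    (M α : ℝ) (hM : 0 < M) (hα : 0 < α) (hα1 : α ≤ 1)
    (ρ : ℕ → ℕ → C(Set.Icc a b, ℝ)) (hρ : ∀ j k x, 0 ≤ ρ j k x)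
    (xs : ℕ → ℕ → Set.Icc a b)
    (hρ1 : ∀ j (x : Set.Icc a b), HasSum (fun k => ρ j k x) 1)
    (G : ℕ → C(Set.Icc a b, ℝ) → C(Set.Icc a b, ℝ))
    (hG : ∀ j (f : C(Set.Icc a b, ℝ)) (x : Set.Icc a b),
      HasSum (fun k => ρ j k x * f (xs j k)) (G j f x))
    (hGconv : ∀ i ∈ ({0, 1, 2} : Finset ℕ),
      P.StatTendsto (fun j => ‖G j (monomial a b i) - monomial a b i‖) 0)
    (ψ : ℝ → ℝ) (hψ : ContDiffOn ℝ r ψ (Set.Icc a b))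
    (hLip : ∀ x ∈ Set.Icc a b, ∀ y ∈ Set.Icc a b,
      |iteratedDerivWithin r ψ (Set.Icc a b) x - iteratedDerivWithin r ψ (Set.Icc a b) y| ≤
        M * |x - y| ^ α)
    (Gr : ℕ → C(Set.Icc a b, ℝ))
    (hGr : ∀ j (x : Set.Icc a b),
      HasSum (fun k => ρ j k x *
          ∑ ν ∈ Finset.range (r + 1),
            iteratedDerivWithin ν ψ (Set.Icc a b) (xs j k) *
              ((x : ℝ) - (xs j k : ℝ)) ^ ν / (ν.factorial : ℝ))
        (Gr j x)) :
    P.StatTendsto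
      (fun j => ‖Gr j - (⟨(Set.Icc a b).restrict ψ, hψ.continuousOn.restrict⟩ : C(Set.Icc a b, ℝ))‖)
      0 :=
  rth_order_generalization_pstat_general P a b hab r M α hM hα ρ hρ xs hρ1 G hG hGconv ψ hψ hLip Gr
    hGr
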